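/- If Σ ∈ ℝ^{k×k} is symmetric positive definite, then the matrix Λ(Σ) ∈ ℝ^{(k+1)×(k+1)} defined by Λ(Σ)_{00} = 0, Λ(Σ)_{0i} = Λ(Σ)_{i0} = Σ_{ii}/4 and Λ(Σ)_{ij} = (Σ_{ii} + Σ_{jj} - 2Σ_{ij})/4 for 1 ≤ i,j ≤ k is symmetric with zero diagonal and strictly conditionally negative definite (xᵀΛ(Σ)x < 0 for all nonzero x with Σ_i x_i = 0). -/

import Mathlib

/-!
Write `Σ` as the Gram matrix of vectors `v₁, …, v_k` and put `v₀ = 0`; the bordered matrix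
`T = [[0, 0], [0, Σ]]` is the Gram matrix of `v₀, …, v_k`, and `4 Λ(Σ)` is their matrix of squared
distances `T_ii + T_jj - 2 T_ij`. For `x` with `∑ xᵢ = 0` the diagonal terms cancel, so
`xᵀ Λ(Σ) x = -½ xᵀ T x = -½ yᵀ Σ y` with `y = (x₁, …, x_k)`, and `y ≠ 0` because a nonzero `x`
with zero sum cannot vanish off its first coordinate.
-/

open Matrix Finset

/-- The matrix `Λ(Σ)` built from a symmetric positive definite `Σ`. -/
noncomputable def LamOf (k : ℕ) (S : Matrix (Fin k) (Fin k) ℝ) :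
    Matrix (Fin (k + 1)) (Fin (k + 1)) ℝ :=
  Matrix.of fun i j =>
    Fin.cases
      (Fin.cases 0 (fun j' => S j' j' / 4) j)
      (fun i' => Fin.cases (S i' i' / 4)
        (fun j' => (S i' i' + S j' j' - 2 * S i' j') / 4) j) i

namespace Matrix

section sqDist

variable {ι R : Type*} [CommRing R]

/-- If `G` is the Gram matrix of points `vᵢ` of an inner product space, `G.sqDist i j` is
`‖vᵢ - vⱼ‖²`. -/
def sqDist (G : Matrix ι ι R) : Matrix ι ι R :=
  of fun i j => G i i + G j j - 2 * G i j

theorem sqDist_apply (G : Matrix ι ι R) (i j : ι) :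
    G.sqDist i j = G i i + G j j - 2 * G i j := rfl

theorem sqDist_apply_self (G : Matrix ι ι R) (i : ι) : G.sqDist i i = 0 := by
  rw [sqDist_apply]; ring

theorem IsSymm.sqDist {G : Matrix ι ι R} (hG : G.IsSymm) : G.sqDist.IsSymm :=
  IsSymm.ext fun i j => by rw [sqDist_apply, sqDist_apply, hG.apply i j]; ring

/-- On vectors with zero sum the two diagonal terms of `sqDist` cancel out. -/
theorem sum_sum_mul_sqDist_mul [Fintype ι] {G : Matrix ι ι R} {x : ι → R} (hx : ∑ i, x i = 0) :
    ∑ i, ∑ j, x i * G.sqDist i j * x j = -2 * ∑ i, ∑ j, x i * G i j * x j := by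
  calc ∑ i, ∑ j, x i * G.sqDist i j * x j
      = ∑ i, ∑ j, (x i * G i i * x j + x i * (G j j * x j) - 2 * (x i * G i j * x j)) :=
        sum_congr rfl fun i _ => sum_congr rfl fun j _ => by rw [sqDist_apply]; ring
    _ = -2 * ∑ i, ∑ j, x i * G i j * x j := by
        simp only [sum_add_distrib, sum_sub_distrib, ← mul_sum, ← sum_mul, hx, mul_zero, zero_mul,
          sum_const_zero]
        ring

end sqDist

section zeroBorder

variable {R : Type*} [Zero R] {k : ℕ}

/-- The `(k+1) × (k+1)` matrix with `S` in the lower right block and zeros in row and column `0`. -/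
def zeroBorder (S : Matrix (Fin k) (Fin k) R) : Matrix (Fin (k + 1)) (Fin (k + 1)) R :=
  of fun i j => Fin.cases 0 (fun i' => Fin.cases 0 (S i') j) i

@[simp] theorem zeroBorder_zero_left (S : Matrix (Fin k) (Fin k) R) (j : Fin (k + 1)) :
    zeroBorder S 0 j = 0 := rfl

@[simp] theorem zeroBorder_zero_right (S : Matrix (Fin k) (Fin k) R) (i : Fin (k + 1)) :
    zeroBorder S i 0 = 0 := by
  cases i using Fin.cases <;> rfl

@[simp] theorem zeroBorder_succ_succ (S : Matrix (Fin k) (Fin k) R) (i j : Fin k) :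
    zeroBorder S i.succ j.succ = S i j := rfl

theorem IsSymm.zeroBorder {S : Matrix (Fin k) (Fin k) R} (hS : S.IsSymm) :
    (zeroBorder S).IsSymm :=
  IsSymm.ext fun i j => by
    cases i using Fin.cases <;> cases j using Fin.cases <;> simp [hS.apply]

theorem sum_sum_mul_zeroBorder_mul {R : Type*} [CommRing R] (S : Matrix (Fin k) (Fin k) R)
    (x : Fin (k + 1) → R) :
    ∑ i, ∑ j, x i * zeroBorder S i j * x j = ∑ i, ∑ j, Fin.tail x i * S i j * Fin.tail x j := by
  simp [Fin.sum_univ_succ, Fin.tail]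

end zeroBorder

theorem PosDef.sum_sum_mul_mul_pos {n R : Type*} [Fintype n] [CommRing R] [PartialOrder R]
    [StarRing R] [TrivialStar R] {S : Matrix n n R} (hS : S.PosDef) {x : n → R} (hx : x ≠ 0) :
    0 < ∑ i, ∑ j, x i * S i j * x j := by
  simpa [dotProduct, mulVec, mul_sum, mul_assoc] using hS.dotProduct_mulVec_pos hx

end Matrix

theorem Fin.tail_ne_zero_of_sum_eq_zero {M : Type*} [AddCommMonoid M] {n : ℕ}
    {x : Fin (n + 1) → M} (hx : x ≠ 0) (hsum : ∑ i, x i = 0) : Fin.tail x ≠ 0 := by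
  intro htail
  have hhead : x 0 = 0 := by
    simpa [Fin.sum_univ_succ, ← Fin.tail_def, htail] using hsum
  exact hx (funext fun i => by cases i using Fin.cases; exacts [hhead, congrFun htail _])

theorem LamOf_apply (k : ℕ) (S : Matrix (Fin k) (Fin k) ℝ) (i j : Fin (k + 1)) :
    LamOf k S i j = (zeroBorder S).sqDist i j / 4 := by
  cases i using Fin.cases <;> cases j using Fin.cases <;> simp [LamOf, sqDist_apply]

/-- If `Σ` is symmetric positive definite, then `Λ(Σ)` is symmetric with zero diagonal
and strictly conditionally negative definite. -/
theorem LamOf_conditionally_negative_definite (k : ℕ)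
    (S : Matrix (Fin k) (Fin k) ℝ) (hS : S.PosDef) :
    (∀ i j, LamOf k S i j = LamOf k S j i) ∧
    (∀ i, LamOf k S i i = 0) ∧
    (∀ x : Fin (k + 1) → ℝ, x ≠ 0 → ∑ i, x i = 0 →
      ∑ i, ∑ j, x i * LamOf k S i j * x j < 0) := by
  have hsymm : (zeroBorder S).sqDist.IsSymm :=
    (isHermitian_iff_isSymm.mp hS.isHermitian).zeroBorder.sqDist
  refine ⟨fun i j => by rw [LamOf_apply, LamOf_apply, hsymm.apply],
    fun i => by rw [LamOf_apply, sqDist_apply_self, zero_div], fun x hx hsum => ?_⟩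
  have hpos : 0 < ∑ i, ∑ j, Fin.tail x i * S i j * Fin.tail x j :=
    hS.sum_sum_mul_mul_pos (Fin.tail_ne_zero_of_sum_eq_zero hx hsum)
  calc ∑ i, ∑ j, x i * LamOf k S i j * x j
      = (∑ i, ∑ j, x i * (zeroBorder S).sqDist i j * x j) / 4 := by
        simp only [LamOf_apply, sum_div, mul_div_assoc', div_mul_eq_mul_div]
    _ = -(∑ i, ∑ j, Fin.tail x i * S i j * Fin.tail x j) / 2 := by
        rw [sum_sum_mul_sqDist_mul hsum, sum_sum_mul_zeroBorder_mul]; ring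
    _ < 0 := by linarith
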